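/- A Tychonoff space X is nearly pseudocompact if and only if every hz-filter on X is fixed, if and only if every hz-ultrafilter on X is fixed. -/

import Mathlib

open Set Topology

variable {X : Type*}

def IsZeroSet [TopologicalSpace X] (Z : Set X) : Prop :=
  ∃ f : X → ℝ, Continuous f ∧ Z = {x | f x = 0}

def IsZFilter [TopologicalSpace X] (F : Set (Set X)) : Prop :=
  (∀ Z ∈ F, IsZeroSet Z) ∧ (∅ : Set X) ∉ F ∧ Set.univ ∈ F ∧
  (∀ Z₁ ∈ F, ∀ Z₂ ∈ F, Z₁ ∩ Z₂ ∈ F) ∧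
  (∀ Z₁ ∈ F, ∀ Z₂ : Set X, IsZeroSet Z₂ → Z₁ ⊆ Z₂ → Z₂ ∈ F)

def IsZUltrafilter [TopologicalSpace X] (F : Set (Set X)) : Prop :=
  IsZFilter F ∧ ∀ G : Set (Set X), IsZFilter G → F ⊆ G → G = F

def IsPrimeZFilter [TopologicalSpace X] (F : Set (Set X)) : Prop :=
  IsZFilter F ∧ ∀ Z₁ Z₂ : Set X, IsZeroSet Z₁ → IsZeroSet Z₂ → Z₁ ∪ Z₂ ∈ F →
    Z₁ ∈ F ∨ Z₂ ∈ F

def HasCIP (F : Set (Set X)) : Prop :=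
  ∀ s : ℕ → Set X, (∀ n, s n ∈ F) → (⋂ n, s n).Nonempty

def IsFixedFamily (F : Set (Set X)) : Prop := (⋂₀ F).Nonempty

def IsRealcompact (Y : Type*) [TopologicalSpace Y] : Prop :=
  ∀ F : Set (Set Y), IsZUltrafilter F → HasCIP F → IsFixedFamily F

def CompletelySeparated [TopologicalSpace X] (A B : Set X) : Prop :=
  ∃ f : X → ℝ, Continuous f ∧ (∀ x ∈ A, f x = 0) ∧ (∀ x ∈ B, f x = 1)

def IsHard [TopologicalSpace X] (H : Set X) : Prop :=
  IsClosed H ∧ ∃ K : Set X, IsCompact K ∧ ∀ V : Set X, IsOpen V → K ⊆ V →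
    ∃ P : Set X, IsRealcompact ↥P ∧ CompletelySeparated (H \ V) Pᶜ

def IsPseudocompact (Y : Type*) [TopologicalSpace Y] : Prop :=
  ∀ f : Y → ℝ, Continuous f → ∃ M : ℝ, ∀ y, |f y| ≤ M

def NearlyPseudocompact (Y : Type*) [TopologicalSpace Y] : Prop :=
  ∃ X₁ X₂ : Set Y, X₁ ∪ X₂ = Set.univ ∧
    X₁ = closure (interior X₁) ∧
    X₁ = closure {y : Y | ∃ K : Set Y, IsCompact K ∧ K ∈ nhds y} ∧
    IsPseudocompact ↥X₁ ∧
    X₂ = closure (interior X₂) ∧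
    (∀ y ∈ X₂, ¬ ∃ N ∈ nhds y, IsRealcompact ↥N) ∧
    interior (X₁ ∩ X₂) = (∅ : Set Y)

def IsHZFilter [TopologicalSpace X] (F : Set (Set X)) : Prop :=
  IsZFilter F ∧ ∀ Z ∈ F, ∃ H ∈ F, IsHard H ∧ H ⊆ Z

def IsHZUltrafilter [TopologicalSpace X] (F : Set (Set X)) : Prop :=
  IsZUltrafilter F ∧ ∃ H ∈ F, IsHard H

def deltaX (X : Type*) [TopologicalSpace X] : Type _ :=
  {F : Set (Set X) // IsZUltrafilter F ∧ (IsFixedFamily F ∨ ∃ H ∈ F, IsHard H)}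

def deltaCl [TopologicalSpace X] (Z : Set X) : Set (deltaX X) :=
  {p | Z ∈ p.1}

instance [TopologicalSpace X] : TopologicalSpace (deltaX X) :=
  TopologicalSpace.generateFrom {U | ∃ Z : Set X, IsZeroSet Z ∧ U = (deltaCl Z)ᶜ}

def pointUltra [TopologicalSpace X] (x : X) : Set (Set X) :=
  {Z | IsZeroSet Z ∧ x ∈ Z}
section Helpers

variable [TopologicalSpace X]

lemma IsZeroSet.isClosed {Z : Set X} (h : IsZeroSet Z) : IsClosed Z := by
  obtain ⟨f, hf, rfl⟩ := h
  exact isClosed_eq hf continuous_const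

lemma isZeroSet_univ : IsZeroSet (univ : Set X) :=
  ⟨fun _ => 0, continuous_const, by ext x; simp⟩

lemma IsZeroSet.inter {Z₁ Z₂ : Set X} (h₁ : IsZeroSet Z₁) (h₂ : IsZeroSet Z₂) :
    IsZeroSet (Z₁ ∩ Z₂) := by
  obtain ⟨f, hf, rfl⟩ := h₁
  obtain ⟨g, hg, rfl⟩ := h₂
  refine ⟨fun x => |f x| + |g x|, (hf.abs).add (hg.abs), ?_⟩
  ext x
  simp only [mem_inter_iff, mem_setOf_eq]
  constructor
  · rintro ⟨h1, h2⟩; simp [h1, h2]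
  · intro h
    have h1 : |f x| = 0 ∧ |g x| = 0 :=
      (add_eq_zero_iff_of_nonneg (abs_nonneg _) (abs_nonneg _)).1 h
    exact ⟨abs_eq_zero.1 h1.1, abs_eq_zero.1 h1.2⟩

lemma IsZeroSet.preimage {Y : Type*} [TopologicalSpace Y] {Z : Set X} (h : IsZeroSet Z)
    {g : Y → X} (hg : Continuous g) : IsZeroSet (g ⁻¹' Z) := by
  obtain ⟨f, hf, rfl⟩ := h
  exact ⟨f ∘ g, hf.comp hg, rfl⟩

lemma exists_sep [T35Space X] {x : X} {K : Set X} (hK : IsClosed K) (hx : x ∉ K) :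
    ∃ g : X → ℝ, Continuous g ∧ g x = 1 ∧ (∀ y ∈ K, g y = 0) ∧ ∀ y, g y ∈ Icc (0:ℝ) 1 := by
  obtain ⟨f, hf, hfx, hfK⟩ := CompletelyRegularSpace.completely_regular x K hK hx
  refine ⟨fun y => 1 - (f y : ℝ), continuous_const.sub (continuous_subtype_val.comp hf),
    by simp [hfx], fun y hy => by simp [hfK hy], fun y => ?_⟩
  have h1 := (f y).2.1
  have h2 := (f y).2.2
  constructor <;> simp_all

instance instCRSubtype [CompletelyRegularSpace X] {s : Set X} :
    CompletelyRegularSpace s := by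
  constructor
  intro x K hK hx
  obtain ⟨C, hC, hCK⟩ := isClosed_induced_iff.1 hK
  have hxC : (x : X) ∉ C := fun h => hx (by rw [← hCK]; exact h)
  obtain ⟨f, hf, hfx, hfC⟩ := CompletelyRegularSpace.completely_regular (x : X) C hC hxC
  exact ⟨f ∘ Subtype.val, hf.comp continuous_subtype_val, hfx,
    fun k hk => hfC (by rw [← hCK] at hk; exact hk)⟩

instance instT35Subtype [T35Space X] {s : Set X} : T35Space s := {}

lemma IsZFilter.finsetInter_mem {F : Set (Set X)} (hF : IsZFilter F) {ι : Type*}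
    (t : Finset ι) (f : ι → Set X) (h : ∀ i ∈ t, f i ∈ F) : (⋂ i ∈ t, f i) ∈ F := by
  classical
  induction t using Finset.induction_on with
  | empty => simpa using hF.2.2.1
  | insert a t' hnotmem ih =>
    have hrw : (⋂ i ∈ insert a t', f i) = f a ∩ ⋂ i ∈ t', f i := by
      simp [Set.biInter_insert]
    rw [hrw]
    exact hF.2.2.2.1 _ (h a (Finset.mem_insert_self a t')) _
      (ih fun i hi => h i (Finset.mem_insert_of_mem hi))

lemma exists_zultrafilter {F : Set (Set X)} (hF : IsZFilter F) :
    ∃ U, F ⊆ U ∧ IsZUltrafilter U := by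
  have hzorn : ∀ c ⊆ {G : Set (Set X) | IsZFilter G}, IsChain (· ⊆ ·) c → c.Nonempty →
      ∃ ub ∈ {G : Set (Set X) | IsZFilter G}, ∀ s ∈ c, s ⊆ ub := by
    intro c hcS hchain hcne
    obtain ⟨G₀, hG₀⟩ := hcne
    refine ⟨⋃₀ c, ⟨?_, ?_, ?_, ?_, ?_⟩, fun s hs => subset_sUnion_of_mem hs⟩
    · rintro Z ⟨G, hGc, hZG⟩; exact (hcS hGc).1 Z hZG
    · rintro ⟨G, hGc, hG⟩; exact (hcS hGc).2.1 hG
    · exact ⟨G₀, hG₀, (hcS hG₀).2.2.1⟩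
    · rintro Z₁ ⟨G₁, hG₁, hZ₁⟩ Z₂ ⟨G₂, hG₂, hZ₂⟩
      rcases hchain.total hG₁ hG₂ with h | h
      · exact ⟨G₂, hG₂, (hcS hG₂).2.2.2.1 _ (h hZ₁) _ hZ₂⟩
      · exact ⟨G₁, hG₁, (hcS hG₁).2.2.2.1 _ hZ₁ _ (h hZ₂)⟩
    · rintro Z₁ ⟨G, hGc, hZG⟩ Z₂ hZ₂ hsub
      exact ⟨G, hGc, (hcS hGc).2.2.2.2 _ hZG _ hZ₂ hsub⟩
  obtain ⟨U, hFU, hU⟩ := zorn_subset_nonempty {G : Set (Set X) | IsZFilter G} hzorn F hF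
  exact ⟨U, hFU, hU.prop, fun G hG hUG => subset_antisymm (hU.2 hG hUG) hUG⟩

lemma mem_of_meets {U : Set (Set X)} (hU : IsZUltrafilter U) {Z : Set X} (hZ : IsZeroSet Z)
    (h : ∀ W ∈ U, (Z ∩ W).Nonempty) : Z ∈ U := by
  have hG : IsZFilter {Z' : Set X | IsZeroSet Z' ∧ ∃ W ∈ U, Z ∩ W ⊆ Z'} := by
    refine ⟨fun _ h => h.1, ?_, ⟨isZeroSet_univ, univ, hU.1.2.2.1, subset_univ _⟩, ?_, ?_⟩
    · rintro ⟨_, W, hW, hsub⟩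
      exact (h W hW).ne_empty (subset_empty_iff.1 hsub)
    · rintro Z₁ ⟨hz₁, W₁, hW₁, hs₁⟩ Z₂ ⟨hz₂, W₂, hW₂, hs₂⟩
      refine mem_setOf.2 ⟨hz₁.inter hz₂, W₁ ∩ W₂, hU.1.2.2.2.1 _ hW₁ _ hW₂,
        fun x hx => ⟨hs₁ ⟨hx.1, hx.2.1⟩, hs₂ ⟨hx.1, hx.2.2⟩⟩⟩
    · rintro Z₁ ⟨hz₁, W, hW, hs⟩ Z₂ hz₂ hsub
      exact mem_setOf.2 ⟨hz₂, W, hW, hs.trans hsub⟩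
  have hsub : U ⊆ {Z' : Set X | IsZeroSet Z' ∧ ∃ W ∈ U, Z ∩ W ⊆ Z'} :=
    fun W hW => mem_setOf.2 ⟨hU.1.1 W hW, W, hW, inter_subset_right⟩
  have := hU.2 _ hG hsub
  rw [← this]
  exact mem_setOf.2 ⟨hZ, univ, hU.1.2.2.1, by simp⟩

lemma IsZUltrafilter.prime {U : Set (Set X)} (hU : IsZUltrafilter U) : IsPrimeZFilter U := by
  refine ⟨hU.1, fun Z₁ Z₂ hz₁ hz₂ hmem => ?_⟩
  by_contra hcon
  push_neg at hcon
  have h₁ : ∃ W ∈ U, Z₁ ∩ W = ∅ := by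
    by_contra h; push_neg at h
    exact hcon.1 (mem_of_meets hU hz₁ fun W hW => h W hW)
  have h₂ : ∃ W ∈ U, Z₂ ∩ W = ∅ := by
    by_contra h; push_neg at h
    exact hcon.2 (mem_of_meets hU hz₂ fun W hW => h W hW)
  obtain ⟨W₁, hW₁, he₁⟩ := h₁
  obtain ⟨W₂, hW₂, he₂⟩ := h₂
  have hmem2 : (Z₁ ∪ Z₂) ∩ (W₁ ∩ W₂) ∈ U :=
    hU.1.2.2.2.1 _ hmem _ (hU.1.2.2.2.1 _ hW₁ _ hW₂)
  have heq : (Z₁ ∪ Z₂) ∩ (W₁ ∩ W₂) = ∅ := by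
    rw [eq_empty_iff_forall_notMem] at he₁ he₂ ⊢
    rintro x ⟨h | h, hw⟩
    · exact he₁ x ⟨h, hw.1⟩
    · exact he₂ x ⟨h, hw.2⟩
  rw [heq] at hmem2
  exact hU.1.2.1 hmem2

lemma hasCIP_of_prime_subset {F U : Set (Set X)} (hF : IsPrimeZFilter F) (hFU : F ⊆ U)
    (hU : IsZFilter U) (hcip : HasCIP F) : HasCIP U := by
  intro s hs
  have hz : ∀ n, ∃ f : X → ℝ, Continuous f ∧ s n = {x | f x = 0} := fun n => hU.1 _ (hs n)
  choose f hf hsf using hz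
  set A : ℕ → ℕ → Set X := fun n k => {x | |f n x| ≤ 1 / (k + 1)} with hA
  have hAzero : ∀ n k, IsZeroSet (A n k) := by
    intro n k
    refine ⟨fun x => max (|f n x| - 1 / (k + 1)) 0, ((hf n).abs.sub continuous_const).max
      continuous_const, ?_⟩
    ext x
    simp [hA, max_eq_right_iff, sub_nonpos]
  have hAF : ∀ n k, A n k ∈ F := by
    intro n k
    have hBzero : IsZeroSet {x | 1 / ((k : ℝ) + 1) ≤ |f n x|} := by
      refine ⟨fun x => max (1 / (k + 1) - |f n x|) 0, (continuous_const.sub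
        (hf n).abs).max continuous_const, ?_⟩
      ext x
      simp [max_eq_right_iff, sub_nonpos]
    have hcover : A n k ∪ {x | 1 / ((k : ℝ) + 1) ≤ |f n x|} = univ := by
      ext x
      simp only [hA, mem_union, mem_setOf_eq, mem_univ, iff_true]
      exact le_total _ _
    have hmem : A n k ∪ {x | 1 / ((k : ℝ) + 1) ≤ |f n x|} ∈ F := by
      rw [hcover]; exact hF.1.2.2.1
    rcases hF.2 _ _ (hAzero n k) hBzero hmem with h | h
    · exact h
    · exfalso
      have h1 : {x | 1 / ((k : ℝ) + 1) ≤ |f n x|} ∩ s n ∈ U :=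
        hU.2.2.2.1 _ (hFU h) _ (hs n)
      have h2 : {x | 1 / ((k : ℝ) + 1) ≤ |f n x|} ∩ s n = ∅ := by
        rw [eq_empty_iff_forall_notMem]
        rintro x ⟨hx1, hx2⟩
        rw [hsf n] at hx2
        have h3 : |f n x| = 0 := by rw [mem_setOf_eq] at hx2; simp [hx2]
        rw [mem_setOf_eq, h3] at hx1
        have hk0 : (0:ℝ) < 1 / (k + 1) := by positivity
        linarith
      rw [h2] at h1
      exact hU.2.1 h1
  obtain ⟨x, hx⟩ := hcip (fun i => A (Nat.unpair i).1 (Nat.unpair i).2)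
    (fun i => hAF _ _)
  refine ⟨x, mem_iInter.2 fun n => ?_⟩
  rw [hsf n]
  have hxx : ∀ k : ℕ, |f n x| ≤ 1 / (k + 1) := by
    intro k
    have h3 := mem_iInter.1 hx (Nat.pair n k)
    rw [Nat.unpair_pair] at h3
    exact h3
  have h4 : |f n x| = 0 := by
    by_contra hne
    have hpos : 0 < |f n x| := lt_of_le_of_ne (abs_nonneg _) (Ne.symm hne)
    obtain ⟨k, hk⟩ := exists_nat_one_div_lt hpos
    exact absurd (hxx k) (not_le.2 hk)
  exact abs_eq_zero.1 h4

lemma isHard_mono {H H' : Set X} (hH : IsHard H) (h' : IsClosed H') (hsub : H' ⊆ H) :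
    IsHard H' := by
  obtain ⟨hcl, K, hK, hprop⟩ := hH
  refine ⟨h', K, hK, fun V hV hKV => ?_⟩
  obtain ⟨P, hP, f, hf, h0, h1⟩ := hprop V hV hKV
  exact ⟨P, hP, f, hf, fun x hx => h0 x ⟨hsub hx.1, hx.2⟩, h1⟩

lemma ultra_le_nhds [T35Space X] {𝒢 : Ultrafilter X} {x : X}
    (h : ∀ Z : Set X, IsZeroSet Z → Z ∈ 𝒢 → x ∈ Z) : ↑𝒢 ≤ 𝓝 x := by
  intro N hN
  rw [mem_nhds_iff] at hN
  obtain ⟨U, hUN, hUo, hxU⟩ := hN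
  by_contra hNG
  have hU : U ∉ 𝒢 := fun hh => hNG (𝒢.1.sets_of_superset hh hUN)
  have hUc : Uᶜ ∈ 𝒢 := (Ultrafilter.compl_mem_iff_notMem).2 hU
  obtain ⟨g, hg, hgx, hgK, _⟩ := exists_sep (X := X) hUo.isClosed_compl (by simpa using hxU)
  have hZ : {y | g y = 0} ∈ 𝒢 := 𝒢.1.sets_of_superset hUc (fun y hy => hgK y hy)
  have h5 := h _ ⟨g, hg, rfl⟩ hZ
  rw [mem_setOf_eq] at h5
  rw [h5] at hgx
  exact zero_ne_one hgx

lemma mem_closed_of_ultra {𝒢 : Ultrafilter X} {x : X} {H : Set X} (hH : IsClosed H)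
    (hmem : H ∈ 𝒢) (hle : ↑𝒢 ≤ 𝓝 x) : x ∈ H := by
  by_contra hx
  have h1 : Hᶜ ∈ 𝒢 := hle (hH.isOpen_compl.mem_nhds hx)
  have h2 : H ∩ Hᶜ ∈ 𝒢 := 𝒢.1.inter_sets hmem h1
  rw [inter_compl_self] at h2
  exact Ultrafilter.empty_notMem h2

lemma isRealcompact_sigma {P : Set X} (K : ℕ → Set X) (hK : ∀ n, IsCompact (K n))
    (hP : IsClosed P) (hcov : P ⊆ ⋃ n, K n) : IsRealcompact ↥P := by
  intro U hU hcip
  by_contra hfix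
  rw [IsFixedFamily, not_nonempty_iff_eq_empty] at hfix
  have hC : ∀ n, IsCompact ((Subtype.val ⁻¹' K n : Set ↥P)) := by
    intro n
    rw [Subtype.isCompact_iff]
    have h1 : (Subtype.val '' (Subtype.val ⁻¹' K n : Set ↥P)) = K n ∩ P := by
      rw [Subtype.image_preimage_coe]; exact inter_comm _ _
    rw [h1]
    exact (hK n).inter_right hP
  have hcover : ∀ n, (Subtype.val ⁻¹' K n : Set ↥P) ⊆ ⋃ Z : ↥U, (↑(Z : ↥U) : Set ↥P)ᶜ := by
    intro n p _
    have hp : p ∉ ⋂₀ U := by rw [hfix]; exact notMem_empty p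
    rw [mem_sInter] at hp
    push_neg at hp
    obtain ⟨Z, hZU, hpZ⟩ := hp
    exact mem_iUnion.2 ⟨⟨Z, hZU⟩, hpZ⟩
  have hopen : ∀ Z : ↥U, IsOpen ((↑(Z : ↥U) : Set ↥P)ᶜ) :=
    fun Z => (hU.1.1 _ Z.2).isClosed.isOpen_compl
  have ht : ∀ n, ∃ t : Finset ↥U, (Subtype.val ⁻¹' K n : Set ↥P) ⊆
      ⋃ Z ∈ t, (↑(Z : ↥U) : Set ↥P)ᶜ :=
    fun n => (hC n).elim_finite_subcover _ hopen (hcover n)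
  choose t ht using ht
  set S : Set (Set ↥P) := insert univ (⋃ n, (fun Z : ↥U => (Z : Set ↥P)) '' (t n)) with hS
  have hScount : S.Countable := by
    refine (Set.Countable.insert _ ?_)
    exact countable_iUnion fun n => ((t n).finite_toSet.image _).countable
  have hSU : S ⊆ U := by
    rintro Z (rfl | hZ)
    · exact hU.1.2.2.1
    · obtain ⟨n, hn⟩ := mem_iUnion.1 hZ
      obtain ⟨W, _, rfl⟩ := hn
      exact W.2
  have hSne : S.Nonempty := ⟨univ, mem_insert _ _⟩
  obtain ⟨g, hg⟩ := hScount.exists_eq_range hSne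
  have hgU : ∀ n, g n ∈ U := fun n => hSU (hg ▸ mem_range_self n)
  obtain ⟨p, hp⟩ := hcip g hgU
  have hpS : ∀ Z ∈ S, p ∈ Z := by
    intro Z hZ
    rw [hg] at hZ
    obtain ⟨n, rfl⟩ := hZ
    exact mem_iInter.1 hp n
  obtain ⟨n, hn⟩ := mem_iUnion.1 (hcov p.2)
  have hpn : p ∈ (Subtype.val ⁻¹' K n : Set ↥P) := hn
  obtain ⟨Z, hZt, hpZ⟩ := mem_iUnion₂.1 (ht n hpn)
  exact hpZ (hpS _ (mem_insert_iff.2 (Or.inr (mem_iUnion.2 ⟨n, mem_image_of_mem _ hZt⟩))))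

lemma ultra_cluster_of_all_nhds {K : Set X} (hK : IsCompact K) (𝒢 : Ultrafilter X)
    (h : ∀ V : Set X, IsOpen V → K ⊆ V → V ∈ 𝒢) : ∃ x ∈ K, ↑𝒢 ≤ 𝓝 x := by
  by_contra hcon
  push_neg at hcon
  have hU : ∀ x : ↥K, ∃ U : Set X, IsOpen U ∧ (x:X) ∈ U ∧ U ∉ 𝒢 := by
    intro x
    have h1 := hcon x x.2
    rw [Filter.le_def] at h1; push_neg at h1
    obtain ⟨N, hN, hN𝒢⟩ := h1
    rw [mem_nhds_iff] at hN
    obtain ⟨U, hUN, hUo, hxU⟩ := hN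
    exact ⟨U, hUo, hxU, fun hU => hN𝒢 (𝒢.1.sets_of_superset hU hUN)⟩
  choose U hUo hxU hU𝒢 using hU
  have hcov : K ⊆ ⋃ x : ↥K, U x := fun y hy => mem_iUnion.2 ⟨⟨y, hy⟩, hxU _⟩
  obtain ⟨t, ht⟩ := hK.elim_finite_subcover U hUo hcov
  have hV : (⋃ x ∈ (t : Set ↥K), U x) ∈ 𝒢 := by
    have := h _ (isOpen_biUnion fun x (_ : x ∈ t) => hUo x) ht
    simpa using this
  rw [Ultrafilter.finite_biUnion_mem_iff t.finite_toSet] at hV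
  obtain ⟨x, _, hx⟩ := hV
  exact hU𝒢 x hx

lemma tsum_tail_le {a : ℕ → ℝ} (n : ℕ) (h0 : ∀ m, 0 ≤ a m) (hb : ∀ m, a m ≤ (1/2)^m)
    (hz : ∀ m ≤ n, a m = 0) : (∑' m, a m) ≤ (1/2)^n := by
  have hsum : Summable a := Summable.of_nonneg_of_le h0 hb summable_geometric_two
  have h1 : (∑' m, a m) = ∑' m, a (m + (n+1)) := by
    rw [← Summable.sum_add_tsum_nat_add (n+1) hsum]
    rw [Finset.sum_eq_zero (fun m hm => hz m (by
      rw [Finset.mem_range] at hm; omega))]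
    ring
  rw [h1]
  have hgeo : Summable (fun m : ℕ => (1/2:ℝ)^(m + (n+1))) := by
    simpa [Function.comp_def] using (summable_geometric_two.comp_injective (add_left_injective (n+1)))
  have h2 : (∑' m, a (m + (n+1))) ≤ ∑' m : ℕ, (1/2:ℝ)^(m + (n+1)) :=
    Summable.tsum_le_tsum (fun m => hb _) ((summable_nat_add_iff (n+1)).2 hsum) hgeo
  have h3 : (∑' m : ℕ, (1/2:ℝ)^(m + (n+1))) = (1/2)^n := by
    have : ∀ m : ℕ, (1/2:ℝ)^(m + (n+1)) = (1/2)^m * (1/2)^(n+1) := fun m => pow_add _ _ _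
    rw [tsum_congr this, tsum_mul_right, tsum_geometric_two]
    rw [pow_succ]
    ring
  linarith

end Helpers

section Feeble

variable {Y : Type*} [TopologicalSpace Y]

lemma feeble_of_pseudocompact [T35Space Y] (h : IsPseudocompact Y) {U : ℕ → Set Y}
    (hop : ∀ n, IsOpen (U n)) (hne : ∀ n, (U n).Nonempty)
    (hdec : ∀ m n, m ≤ n → U n ⊆ U m) : (⋂ n, closure (U n)).Nonempty := by
  by_contra hcl
  rw [not_nonempty_iff_eq_empty] at hcl
  choose p hp using hne
  have hsep : ∀ n, ∃ g : Y → ℝ, Continuous g ∧ g (p n) = 1 ∧ (∀ y ∈ (U n)ᶜ, g y = 0) ∧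
      ∀ y, g y ∈ Icc (0:ℝ) 1 :=
    fun n => exists_sep (hop n).isClosed_compl (by simpa using hp n)
  choose g hg hgp hgc hgicc using hsep
  set G : Y → ℝ := fun y => ∑ᶠ n : ℕ, (n : ℝ) * g n y with hG
  have hsupp : ∀ n : ℕ, Function.support (fun y => (n : ℝ) * g n y) ⊆ U n := by
    intro n y hy
    by_contra hyU
    exact hy (by simp [hgc n y hyU])
  have hlf : LocallyFinite fun n : ℕ => Function.support (fun y => (n : ℝ) * g n y) := by
    intro y
    have h1 : y ∉ ⋂ n, closure (U n) := by rw [hcl]; exact notMem_empty y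
    rw [mem_iInter] at h1
    push_neg at h1
    obtain ⟨N, hN⟩ := h1
    refine ⟨(closure (U N))ᶜ, isClosed_closure.isOpen_compl.mem_nhds (by simpa using hN), ?_⟩
    apply Set.Finite.subset (Set.finite_Iio N)
    rintro n ⟨z, hz1, hz2⟩
    by_contra hn
    rw [mem_Iio, not_lt] at hn
    exact hz2 (subset_closure (hdec N n hn (hsupp n hz1)))
  have hGc : Continuous G := continuous_finsum (fun n => continuous_const.mul (hg n)) hlf
  obtain ⟨M, hM⟩ := h G hGc
  obtain ⟨n, hn⟩ := exists_nat_gt M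
  have hfin : (Function.support fun j : ℕ => (j : ℝ) * g j (p n)).Finite := by
    have h2 := hlf.point_finite (p n)
    apply h2.subset
    intro j hj
    exact hj
  have hle : (n : ℝ) * g n (p n) ≤ G (p n) :=
    single_le_finsum (f := fun j : ℕ => (j : ℝ) * g j (p n)) n hfin
      (fun j => mul_nonneg (Nat.cast_nonneg j) (hgicc j (p n)).1)
  rw [hgp n, mul_one] at hle
  have h3 := hM (p n)
  have habs : G (p n) ≤ |G (p n)| := le_abs_self _
  linarith

lemma pseudocompact_of_feeble
    (hfeeble : ∀ U : ℕ → Set Y, (∀ n, IsOpen (U n)) → (∀ n, (U n).Nonempty) →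
      (∀ m n, m ≤ n → U n ⊆ U m) → (⋂ n, closure (U n)).Nonempty) :
    IsPseudocompact Y := by
  intro f hf
  by_contra hb
  push_neg at hb
  have hne : ∀ n : ℕ, {y | (n:ℝ) < |f y|}.Nonempty := by
    intro n
    obtain ⟨y, hy⟩ := hb n
    exact ⟨y, hy⟩
  have hop : ∀ n : ℕ, IsOpen {y | (n:ℝ) < |f y|} :=
    fun n => isOpen_lt continuous_const hf.abs
  have hdec : ∀ m n : ℕ, m ≤ n → {y | (n:ℝ) < |f y|} ⊆ {y | (m:ℝ) < |f y|} := by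
    intro m n hmn y hy
    rw [mem_setOf_eq] at hy ⊢
    have h1 : (m:ℝ) ≤ n := Nat.cast_le.2 hmn
    linarith
  obtain ⟨z, hz⟩ := hfeeble _ hop hne hdec
  rw [mem_iInter] at hz
  have hzn : ∀ n : ℕ, (n:ℝ) ≤ |f z| := by
    intro n
    have h1 : closure {y | (n:ℝ) < |f y|} ⊆ {y | (n:ℝ) ≤ |f y|} :=
      closure_minimal (fun y hy => le_of_lt (mem_setOf_eq ▸ hy))
        (isClosed_le continuous_const hf.abs)
    exact h1 (hz n)
  obtain ⟨n, hn⟩ := exists_nat_gt |f z|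
  exact absurd (hzn n) (not_le.2 hn)

end Feeble

section Mains
variable [TopologicalSpace X]

/-- If every hz-filter is fixed, then every hard zero set is compact. -/
lemma hard_zero_compact_of_fixed [T35Space X]
    (hfix : ∀ F : Set (Set X), IsHZFilter F → IsFixedFamily F)
    {H : Set X} (hHz : IsZeroSet H) (hH : IsHard H) : IsCompact H := by
  rw [isCompact_iff_ultrafilter_le_nhds]
  intro 𝒢 hle
  have hH𝒢 : H ∈ 𝒢 := Filter.le_principal_iff.1 hle
  set F : Set (Set X) := {Z | IsZeroSet Z ∧ ∃ Z' : Set X, IsZeroSet Z' ∧ Z' ∈ 𝒢 ∧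
    Z' ∩ H ⊆ Z} with hFdef
  have hFhz : IsHZFilter F := by
    constructor
    · refine ⟨fun _ h => h.1, ?_, ⟨isZeroSet_univ, univ, isZeroSet_univ,
        Filter.univ_mem, subset_univ _⟩, ?_, ?_⟩
      · rintro ⟨_, Z', _, hZ'𝒢, hsub⟩
        have hne : (Z' ∩ H).Nonempty := Ultrafilter.nonempty_of_mem (𝒢.1.inter_sets hZ'𝒢 hH𝒢)
        exact hne.ne_empty (subset_empty_iff.1 hsub)
      · rintro Z₁ ⟨hz₁, Z₁', hz₁', h𝒢₁, hs₁⟩ Z₂ ⟨hz₂, Z₂', hz₂', h𝒢₂, hs₂⟩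
        exact mem_setOf.2 ⟨hz₁.inter hz₂, Z₁' ∩ Z₂', hz₁'.inter hz₂',
          𝒢.1.inter_sets h𝒢₁ h𝒢₂,
          fun x hx => ⟨hs₁ ⟨hx.1.1, hx.2⟩, hs₂ ⟨hx.1.2, hx.2⟩⟩⟩
      · rintro Z₁ ⟨hz₁, Z', hz', h𝒢, hs⟩ Z₂ hz₂ hsub
        exact mem_setOf.2 ⟨hz₂, Z', hz', h𝒢, hs.trans hsub⟩
    · rintro Z ⟨hz, Z', hz', h𝒢, hs⟩
      exact ⟨Z' ∩ H, ⟨hz'.inter hHz, Z', hz', h𝒢, subset_rfl⟩,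
        isHard_mono hH (hz'.inter hHz).isClosed inter_subset_right, hs⟩
  obtain ⟨x, hx⟩ := hfix F hFhz
  have hxall : ∀ Z : Set X, IsZeroSet Z → Z ∈ 𝒢 → x ∈ Z := by
    intro Z hz h𝒢
    exact hx _ (mem_setOf.2 ⟨hz, Z, hz, h𝒢, inter_subset_left⟩)
  have hle2 : ↑𝒢 ≤ 𝓝 x := ultra_le_nhds hxall
  exact ⟨x, mem_closed_of_ultra hHz.isClosed hH𝒢 hle2, hle2⟩

/-- In a nearly pseudocompact space, every hard set is compact. -/
lemma np_hard_compact [T35Space X] (hNP : NearlyPseudocompact X)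
    {H : Set X} (hH : IsHard H) : IsCompact H := by
  obtain ⟨X₁, X₂, hunion, hreg1, hX1L, hpseudo, hreg2, hX2rc, hint⟩ := hNP
  obtain ⟨hHcl, K, hKcpt, hprop⟩ := hH
  rw [isCompact_iff_ultrafilter_le_nhds]
  intro 𝒢 hle
  have hH𝒢 : H ∈ 𝒢 := Filter.le_principal_iff.1 hle
  by_cases hcase : ∀ V : Set X, IsOpen V → K ⊆ V → V ∈ 𝒢
  · obtain ⟨x, hxK, hxle⟩ := ultra_cluster_of_all_nhds hKcpt 𝒢 hcase
    exact ⟨x, mem_closed_of_ultra hHcl hH𝒢 hxle, hxle⟩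
  push_neg at hcase
  obtain ⟨V₀, hV₀o, hKV₀, hV₀𝒢⟩ := hcase
  obtain ⟨P, hPrc, f, hfc, hf0, hf1⟩ := hprop V₀ hV₀o hKV₀
  set S : Set X := H ∩ V₀ᶜ with hSdef
  have hS𝒢 : S ∈ 𝒢 := 𝒢.1.inter_sets hH𝒢 (Ultrafilter.compl_mem_iff_notMem.2 hV₀𝒢)
  have hSf : ∀ x ∈ S, f x = 0 := fun x hx => hf0 x ⟨hx.1, hx.2⟩
  set O : Set X := {x | f x < 1/2} with hOdef
  have hOopen : IsOpen O := isOpen_lt hfc continuous_const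
  have hOP : O ⊆ P := by
    intro x hx
    by_contra hxP
    have h1 := hf1 x hxP
    rw [hOdef, mem_setOf_eq, h1] at hx; norm_num at hx
  have hSO : S ⊆ O := fun x hx => by rw [hOdef, mem_setOf_eq, hSf x hx]; norm_num
  have hSX₁ : S ⊆ X₁ := by
    intro y hy
    have hyX12 : y ∈ X₁ ∪ X₂ := hunion ▸ mem_univ y
    rcases hyX12 with h | h
    · exact h
    · exact absurd ⟨P, Filter.mem_of_superset (hOopen.mem_nhds (hSO hy)) hOP, hPrc⟩
        (hX2rc y h)
  have hP𝒢 : P ∈ 𝒢 := 𝒢.1.sets_of_superset hS𝒢 (hSO.trans hOP)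
  set FP : Set (Set ↥P) := {W | IsZeroSet W ∧ Subtype.val '' W ∈ 𝒢} with hFPdef
  have hFPfilter : IsZFilter FP := by
    refine ⟨fun _ h => h.1, ?_, ⟨isZeroSet_univ, ?_⟩, ?_, ?_⟩
    · rintro ⟨_, hmem⟩
      rw [image_empty] at hmem
      exact Ultrafilter.empty_notMem hmem
    · rw [image_univ, Subtype.range_coe]; exact hP𝒢
    · rintro W₁ ⟨hz₁, h𝒢₁⟩ W₂ ⟨hz₂, h𝒢₂⟩
      refine mem_setOf.2 ⟨hz₁.inter hz₂, ?_⟩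
      rw [image_inter Subtype.val_injective]
      exact 𝒢.1.inter_sets h𝒢₁ h𝒢₂
    · rintro W₁ ⟨hz₁, h𝒢₁⟩ W₂ hz₂ hsub
      exact mem_setOf.2 ⟨hz₂, 𝒢.1.sets_of_superset h𝒢₁ (image_mono hsub)⟩
  have hFPprime : IsPrimeZFilter FP := by
    refine ⟨hFPfilter, fun W₁ W₂ hz₁ hz₂ hmem => ?_⟩
    rw [mem_setOf_eq, image_union] at hmem
    rcases (Ultrafilter.union_mem_iff).1 hmem.2 with h | h
    · exact Or.inl ⟨hz₁, h⟩
    · exact Or.inr ⟨hz₂, h⟩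
  have hFPcip : HasCIP FP := by
    intro s hs
    set I : ℕ → Set ↥P := fun n => ⋂ m ∈ Finset.range (n+1), s m with hIdef
    have hIFP : ∀ n, I n ∈ FP := fun n => hFPfilter.finsetInter_mem _ _ (fun m _ => hs m)
    have hImem : ∀ n (p : ↥P), p ∈ I n ↔ ∀ m ≤ n, p ∈ s m := by
      intro n p
      rw [hIdef, mem_iInter₂]
      constructor
      · intro h m hm; exact h m (Finset.mem_range.2 (by omega))
      · intro h m hm; exact h m (by rw [Finset.mem_range] at hm; omega)
    have hIz : ∀ n, ∃ g : ↥P → ℝ, Continuous g ∧ I n = {p | g p = 0} :=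
      fun n => hFPfilter.1 _ (hIFP n)
    choose g hgc hgI using hIz
    set h : ↥P → ℝ := fun p => ∑' m, (1/2:ℝ)^m * min |g m p| 1 with hhdef
    have hterm_nonneg : ∀ m (p : ↥P), 0 ≤ (1/2:ℝ)^m * min |g m p| 1 :=
      fun m p => mul_nonneg (by positivity) (le_min (abs_nonneg _) zero_le_one)
    have hterm_le : ∀ m (p : ↥P), (1/2:ℝ)^m * min |g m p| 1 ≤ (1/2)^m := by
      intro m p
      have h1 : min |g m p| 1 ≤ 1 := min_le_right _ _
      have h2 : (0:ℝ) < (1/2)^m := by positivity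
      nlinarith
    have hhc : Continuous h := by
      apply continuous_tsum
      · exact fun m => (continuous_const.mul (((hgc m).abs).min continuous_const))
      · exact summable_geometric_two
      · intro m p
        rw [Real.norm_eq_abs, abs_of_nonneg (hterm_nonneg m p)]
        exact hterm_le m p
    have hsummable : ∀ p : ↥P, Summable (fun m => (1/2:ℝ)^m * min |g m p| 1) := fun p =>
      Summable.of_nonneg_of_le (fun m => hterm_nonneg m p) (fun m => hterm_le m p)
        summable_geometric_two
    have hhnonneg : ∀ p, 0 ≤ h p := fun p => tsum_nonneg (fun m => hterm_nonneg m p)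
    have hxn : ∀ n, ∃ p : ↥P, p ∈ I n ∧ (p : X) ∈ S := by
      intro n
      have h1 : (Subtype.val '' I n) ∩ S ∈ 𝒢 := 𝒢.1.inter_sets (hIFP n).2 hS𝒢
      obtain ⟨x, hx1, hx2⟩ := Ultrafilter.nonempty_of_mem h1
      obtain ⟨p, hp, rfl⟩ := hx1
      exact ⟨p, hp, hx2⟩
    choose q hqI hqS using hxn
    have hhq : ∀ n, h (q n) ≤ (1/2)^n := by
      intro n
      apply tsum_tail_le n (fun m => hterm_nonneg m _) (fun m => hterm_le m _)
      intro m hm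
      have hq : q n ∈ I m := (hImem m (q n)).2
        (fun k hk => (hImem n (q n)).1 (hqI n) k (le_trans hk hm))
      rw [hgI m] at hq
      rw [mem_setOf_eq] at hq
      simp [hq]
    set O' : ℕ → Set X := fun n =>
      Subtype.val '' {r : ↥O | h (Set.inclusion hOP r) < 2*(1/2)^n} with hO'def
    have hO'open : ∀ n, IsOpen (O' n) := by
      intro n
      apply hOopen.isOpenMap_subtype_val
      exact isOpen_lt (hhc.comp (continuous_inclusion hOP)) continuous_const
    have hqO' : ∀ n, (q n : X) ∈ O' n := by
      intro n
      refine ⟨⟨(q n : X), hSO (hqS n)⟩, ?_, rfl⟩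
      have heq : Set.inclusion hOP (⟨(q n : X), hSO (hqS n)⟩ : ↥O) = q n := Subtype.ext rfl
      rw [mem_setOf_eq, heq]
      have h2 : (0:ℝ) < (1/2)^n := by positivity
      calc h (q n) ≤ (1/2)^n := hhq n
        _ < 2*(1/2)^n := by linarith
    have hO'dec : ∀ m n, m ≤ n → O' n ⊆ O' m := by
      intro m n hmn
      apply image_mono
      intro r hr
      rw [mem_setOf_eq] at hr ⊢
      have h1 : (2:ℝ)*(1/2)^n ≤ 2*(1/2)^m := by
        have := pow_le_pow_of_le_one (by norm_num : (0:ℝ) ≤ 1/2) (by norm_num) hmn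
        linarith
      linarith
    set W : ℕ → Set ↥X₁ := fun n => Subtype.val ⁻¹' O' n with hWdef
    have hWne : ∀ n, (W n).Nonempty := fun n => ⟨⟨(q n : X), hSX₁ (hqS n)⟩, hqO' n⟩
    obtain ⟨zz, hzz⟩ := feeble_of_pseudocompact hpseudo
      (fun n => (hO'open n).preimage continuous_subtype_val) hWne
      (fun m n hmn => preimage_mono (hO'dec m n hmn))
    rw [mem_iInter] at hzz
    have hzcl : ∀ n, (zz : X) ∈ closure (O' n) := by
      intro n
      have h1 := closure_subtype.1 (hzz n)
      exact closure_mono (image_preimage_subset _ _) h1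
    have hzP : (zz : X) ∈ P := by
      have h1 : closure (O' 0) ⊆ {x | f x ≤ 1/2} := by
        apply closure_minimal
        · rintro x ⟨r, _, rfl⟩
          have : f (r : X) < 1/2 := r.2
          exact le_of_lt this
        · exact isClosed_le hfc continuous_const
      have h2 : f (zz : X) ≤ 1/2 := h1 (hzcl 0)
      by_contra hzP
      have h3 := hf1 _ hzP
      rw [h3] at h2; norm_num at h2
    set zP : ↥P := ⟨(zz : X), hzP⟩ with hzPdef
    have hhz : ∀ n, h zP ≤ 2*(1/2)^n := by
      intro n
      set C : Set ↥P := {p | h p ≤ 2*(1/2)^n} with hCdef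
      have hCclosed : IsClosed C := isClosed_le hhc continuous_const
      have hsub : O' n ⊆ Subtype.val '' C := by
        rintro x ⟨r, hr, rfl⟩
        exact ⟨Set.inclusion hOP r, mem_setOf.2 (le_of_lt hr), rfl⟩
      have h1 : (zz : X) ∈ closure (Subtype.val '' C) := closure_mono hsub (hzcl n)
      have h2 : zP ∈ closure C := closure_subtype.2 h1
      rw [hCclosed.closure_eq] at h2
      exact h2
    have hh0 : h zP = 0 := by
      by_contra hne
      have hpos : 0 < h zP := lt_of_le_of_ne (hhnonneg zP) (Ne.symm hne)
      obtain ⟨n, hn⟩ := exists_pow_lt_of_lt_one (by linarith : (0:ℝ) < h zP / 2)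
        (by norm_num : (1:ℝ)/2 < 1)
      have := hhz n
      linarith
    refine ⟨zP, mem_iInter.2 fun n => ?_⟩
    have hterm0 : (1/2:ℝ)^n * min |g n zP| 1 = 0 := by
      have hle2 : (1/2:ℝ)^n * min |g n zP| 1 ≤ h zP := by
        apply Summable.le_tsum (hsummable zP) n
        intro m _
        exact hterm_nonneg m zP
      have := hterm_nonneg n zP
      linarith [hh0 ▸ hle2]
    have hg0 : g n zP = 0 := by
      have hpow : (0:ℝ) < (1/2)^n := by positivity
      have hmin : min |g n zP| 1 = 0 := by
        rcases mul_eq_zero.1 hterm0 with h | h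
        · exact absurd h (ne_of_gt hpow)
        · exact h
      rcases min_eq_iff.1 hmin with ⟨h1, _⟩ | ⟨h1, _⟩
      · exact abs_eq_zero.1 h1
      · norm_num at h1
    have : zP ∈ I n := by rw [hgI n]; exact hg0
    exact (hImem n zP).1 this n le_rfl
  obtain ⟨UP, hFPUP, hUP⟩ := exists_zultrafilter hFPfilter
  have hUPcip : HasCIP UP := hasCIP_of_prime_subset hFPprime hFPUP hUP.1 hFPcip
  obtain ⟨xh, hxh⟩ := hPrc UP hUP hUPcip
  have hxall : ∀ Z : Set X, IsZeroSet Z → Z ∈ 𝒢 → (xh : X) ∈ Z := by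
    intro Z hz h𝒢
    have hW : (Subtype.val ⁻¹' Z : Set ↥P) ∈ FP := ⟨hz.preimage continuous_subtype_val, by
      rw [Subtype.image_preimage_coe]; exact 𝒢.1.inter_sets hP𝒢 h𝒢⟩
    exact hxh _ (hFPUP hW)
  have hle2 : ↑𝒢 ≤ 𝓝 (xh : X) := ultra_le_nhds hxall
  exact ⟨xh, mem_closed_of_ultra hHcl hH𝒢 hle2, hle2⟩

lemma np_imp_fixed [T35Space X] (hNP : NearlyPseudocompact X) :
    ∀ F : Set (Set X), IsHZFilter F → IsFixedFamily F := by
  intro F hF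
  obtain ⟨H₀, hH₀F, hH₀hard, _⟩ := hF.2 univ hF.1.2.2.1
  have hH₀cpt : IsCompact H₀ := np_hard_compact hNP hH₀hard
  -- the family of hard members of F has nonempty intersection
  set 𝒦 : Set (Set X) := {H | H ∈ F ∧ IsHard H} with h𝒦
  have hinter : (⋂₀ 𝒦).Nonempty := by
    by_contra hcl
    rw [not_nonempty_iff_eq_empty] at hcl
    have hcover : H₀ ⊆ ⋃ H : ↥𝒦, (↑(H : ↥𝒦) : Set X)ᶜ := by
      intro y _
      have hy : y ∉ ⋂₀ 𝒦 := by rw [hcl]; exact notMem_empty y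
      rw [mem_sInter] at hy
      push_neg at hy
      obtain ⟨H, hH𝒦, hyH⟩ := hy
      exact mem_iUnion.2 ⟨⟨H, hH𝒦⟩, hyH⟩
    obtain ⟨t, ht⟩ := hH₀cpt.elim_finite_subcover (fun H : ↥𝒦 => (↑(H : ↥𝒦) : Set X)ᶜ)
      (fun H => (H.2.2.1).isOpen_compl) hcover
    have hmem : H₀ ∩ ⋂ H ∈ t, (↑(H : ↥𝒦) : Set X) ∈ F :=
      hF.1.2.2.2.1 _ hH₀F _ (hF.1.finsetInter_mem t _ (fun H _ => H.2.1))
    have hempty : H₀ ∩ ⋂ H ∈ t, (↑(H : ↥𝒦) : Set X) = ∅ := by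
      rw [eq_empty_iff_forall_notMem]
      rintro y ⟨hyH₀, hyt⟩
      obtain ⟨H, hHt, hyHc⟩ := mem_iUnion₂.1 (ht hyH₀)
      exact hyHc (mem_iInter₂.1 hyt H hHt)
    rw [hempty] at hmem
    exact hF.1.2.1 hmem
  obtain ⟨x, hx⟩ := hinter
  refine ⟨x, fun Z hZ => ?_⟩
  obtain ⟨H, hHF, hHhard, hHZ⟩ := hF.2 Z hZ
  exact hHZ (hx H ⟨hHF, hHhard⟩)

lemma fixed_imp_np [T35Space X]
    (hfix : ∀ F : Set (Set X), IsHZFilter F → IsFixedFamily F) :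
    NearlyPseudocompact X := by
  set L : Set X := {y : X | ∃ K : Set X, IsCompact K ∧ K ∈ nhds y} with hLdef
  have hLopen : IsOpen L := by
    rw [isOpen_iff_mem_nhds]
    rintro y ⟨K, hKc, hKn⟩
    filter_upwards [interior_mem_nhds.2 hKn] with w hw
    exact ⟨K, hKc, mem_interior_iff_mem_nhds.1 hw⟩
  set X₁ : Set X := closure L with hX₁def
  set X₂ : Set X := closure ((closure L)ᶜ) with hX₂def
  have hRL : ∀ y : X, (∃ N ∈ nhds y, IsRealcompact ↥N) → y ∈ L := by
    rintro y ⟨N, hNn, hNrc⟩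
    obtain ⟨g, hgc, hgy, hgz, hgicc⟩ := exists_sep (K := (interior N)ᶜ)
      isOpen_interior.isClosed_compl (by simpa using mem_interior_iff_mem_nhds.2 hNn)
    set Hy : Set X := {x | max (1/2 - g x) 0 = 0} with hHydef
    have hHyz : IsZeroSet Hy := ⟨_, (continuous_const.sub hgc).max continuous_const, rfl⟩
    have hHyeq : Hy = {x | 1/2 ≤ g x} := by
      ext x; simp [hHydef, max_eq_right_iff, sub_nonpos]
    have hHyhard : IsHard Hy := by
      refine ⟨hHyz.isClosed, ∅, isCompact_empty, fun V hV _ => ?_⟩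
      refine ⟨N, hNrc, fun x => max 0 (1 - 2 * g x),
        continuous_const.max (continuous_const.sub (continuous_const.mul hgc)), ?_, ?_⟩
      · rintro x ⟨hx, _⟩
        rw [hHyeq, mem_setOf_eq] at hx
        have h1 : 1 - 2 * g x ≤ 0 := by linarith
        simp [max_eq_left_iff.2 h1]
      · intro x hx
        have h1 : g x = 0 := hgz x (fun h => hx (interior_subset h))
        simp [h1]
    have hHycpt : IsCompact Hy := hard_zero_compact_of_fixed hfix hHyz hHyhard
    refine ⟨Hy, hHycpt, ?_⟩
    have hsub : {x | 1/2 < g x} ⊆ Hy := by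
      rw [hHyeq]; exact fun x hx => mem_setOf.2 (le_of_lt (mem_setOf.1 hx))
    refine Filter.mem_of_superset ((isOpen_lt continuous_const hgc).mem_nhds ?_) hsub
    rw [mem_setOf_eq, hgy]; norm_num
  refine ⟨X₁, X₂, ?_, ?_, ?_, ?_, ?_, ?_, ?_⟩
  · rw [eq_univ_iff_forall]
    intro x
    by_cases hx : x ∈ closure L
    · exact Or.inl hx
    · exact Or.inr (subset_closure hx)
  · apply subset_antisymm
    · exact closure_mono (interior_maximal subset_closure hLopen)
    · calc closure (interior X₁) ⊆ closure X₁ := closure_mono interior_subset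
        _ = X₁ := closure_closure
  · rw [hX₁def, hLdef]
  · -- pseudocompactness of X₁
    apply pseudocompact_of_feeble
    intro U hop hne hdec
    by_contra hcl
    rw [not_nonempty_iff_eq_empty] at hcl
    have hV : ∀ n, ∃ V : Set X, IsOpen V ∧ Subtype.val ⁻¹' V = U n := fun n =>
      isOpen_induced_iff.1 (hop n)
    choose V hVo hVU using hV
    set V' : ℕ → Set X := fun n => ⋂ m ∈ Finset.range (n+1), V m with hV'def
    have hV'o : ∀ n, IsOpen (V' n) := fun n => isOpen_biInter_finset (fun m _ => hVo m)
    have hV'mem : ∀ n (x : X), x ∈ V' n ↔ ∀ m ≤ n, x ∈ V m := by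
      intro n x
      rw [hV'def]
      simp only [mem_iInter, Finset.mem_range]
      constructor
      · intro h m hm; exact h m (by omega)
      · intro h m hm; exact h m (by omega)
    have hV'sub : ∀ m n, m ≤ n → V' n ⊆ V' m := by
      intro m n hmn x hx
      rw [hV'mem] at hx ⊢
      exact fun k hk => hx k (le_trans hk hmn)
    have hV'V : ∀ n, V' n ⊆ V n := fun n x hx => (hV'mem n x).1 hx n le_rfl
    have hne' : ∀ n, (V' n ∩ L).Nonempty := by
      intro n
      obtain ⟨p, hp⟩ := hne n
      have hpV' : (p : X) ∈ V' n := by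
        rw [hV'mem]
        intro m hm
        have hpm : p ∈ U m := hdec m n hm hp
        rw [← hVU m] at hpm
        exact hpm
      obtain ⟨w, hw1, hw2⟩ := mem_closure_iff.1 p.2 _ (hV'o n) hpV'
      exact ⟨w, hw1, hw2⟩
    choose x hxV' hxL using hne'
    choose Kc hKc hKn using fun n => hxL n
    set c : ℕ → Set X := fun n => interior (Kc n) ∩ V' n ∩ L with hcdef
    have hco : ∀ n, IsOpen (c n) :=
      fun n => ((isOpen_interior.inter (hV'o n)).inter hLopen)
    have hxc : ∀ n, x n ∈ c n :=
      fun n => ⟨⟨mem_interior_iff_mem_nhds.2 (hKn n), hxV' n⟩, hxL n⟩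
    have hsep : ∀ n, ∃ g : X → ℝ, Continuous g ∧ g (x n) = 1 ∧
        (∀ y ∈ (c n)ᶜ, g y = 0) ∧ ∀ y, g y ∈ Icc (0:ℝ) 1 :=
      fun n => exists_sep (hco n).isClosed_compl (by simpa using hxc n)
    choose g hg hgx hgc0 hgicc using hsep
    set ψ : ℕ → X → ℝ := fun n x => min 1 (2 - 2 * g n x) with hψdef
    have hψc : ∀ n, Continuous (ψ n) :=
      fun n => continuous_const.min (continuous_const.sub (continuous_const.mul (hg n)))
    have hψ01 : ∀ n x, 0 ≤ ψ n x ∧ ψ n x ≤ 1 := by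
      intro n x
      have h1 := (hgicc n x).1
      have h2 := (hgicc n x).2
      exact ⟨le_min (by norm_num) (by linarith), min_le_left _ _⟩
    have hψ1 : ∀ n x, x ∉ c n → ψ n x = 1 := by
      intro n x hx
      have h1 : g n x = 0 := hgc0 n x hx
      rw [hψdef]
      simp [h1]
    have hψ0 : ∀ n x, ψ n x = 0 ↔ g n x = 1 := by
      intro n x
      rw [hψdef]
      constructor
      · intro h
        rcases min_eq_iff.1 h with ⟨h1, _⟩ | ⟨h1, _⟩
        · norm_num at h1
        · linarith
      · intro h; simp [h]
    have hψlt1 : ∀ n x, ψ n x ≠ 1 → x ∈ c n := by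
      intro n x h
      by_contra hc
      exact h (hψ1 n x hc)
    have hlf : LocallyFinite fun n => Function.mulSupport (ψ n) := by
      intro w
      by_cases hw : w ∈ X₁
      · have h1 : (⟨w, hw⟩ : ↥X₁) ∉ ⋂ n, closure (U n) := by rw [hcl]; simp
        rw [mem_iInter] at h1; push_neg at h1
        obtain ⟨N, hN⟩ := h1
        obtain ⟨W₀, hW₀o, hW₀⟩ := isOpen_induced_iff.1 (isClosed_closure
          (s := U N)).isOpen_compl
        have hwW₀ : w ∈ W₀ := by
          have : (⟨w, hw⟩ : ↥X₁) ∈ Subtype.val ⁻¹' W₀ := by rw [hW₀]; exact hN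
          exact this
        refine ⟨W₀, hW₀o.mem_nhds hwW₀, ?_⟩
        apply (Set.finite_Iio N).subset
        rintro n ⟨z, hz1, hz2⟩
        by_contra hn
        rw [mem_Iio, not_lt] at hn
        have hzc : z ∈ c n := hψlt1 n z (Function.mem_mulSupport.1 hz1)
        have hzX₁ : z ∈ X₁ := subset_closure hzc.2
        have hzUn : (⟨z, hzX₁⟩ : ↥X₁) ∈ U n := by
          rw [← hVU n]; exact hV'V n hzc.1.2
        have hzUN : (⟨z, hzX₁⟩ : ↥X₁) ∈ closure (U N) := subset_closure (hdec N n hn hzUn)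
        have hzc2 : (⟨z, hzX₁⟩ : ↥X₁) ∈ (closure (U N))ᶜ := by
          rw [← hW₀]; exact hz2
        exact hzc2 hzUN
      · refine ⟨(closure L)ᶜ, isClosed_closure.isOpen_compl.mem_nhds hw, ?_⟩
        apply Set.finite_empty.subset
        rintro n ⟨z, hz1, hz2⟩
        exact hz2 (subset_closure (hψlt1 n z (Function.mem_mulSupport.1 hz1)).2)
    have hlfn : ∀ n, LocallyFinite fun m =>
        Function.mulSupport (fun y => if n ≤ m then ψ m y else 1) := by
      intro n
      apply hlf.subset
      intro m y hy
      rw [Function.mem_mulSupport] at hy ⊢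
      by_cases h : n ≤ m
      · rw [if_pos h] at hy; exact hy
      · rw [if_neg h] at hy; exact absurd rfl hy
    set θ : ℕ → X → ℝ := fun n y => ∏ᶠ m, (if n ≤ m then ψ m y else 1) with hθdef
    have hθc : ∀ n, Continuous (θ n) := by
      intro n
      apply continuous_finprod _ (hlfn n)
      intro m
      by_cases h : n ≤ m
      · simp only [if_pos h]; exact hψc m
      · simp only [if_neg h]; exact continuous_const
    have hfin : ∀ n (y : X), (Function.mulSupport fun m =>
        if n ≤ m then ψ m y else 1).Finite := by
      intro n y
      apply ((hlfn n).point_finite y).subset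
      intro m hm
      rw [Function.mem_mulSupport] at hm
      exact Function.mem_mulSupport.2 hm
    have hθ0 : ∀ n (y : X), θ n y = 0 ↔ ∃ m, n ≤ m ∧ ψ m y = 0 := by
      intro n y
      constructor
      · intro h
        by_contra hcon
        push_neg at hcon
        have hne0 : ∀ m, (if n ≤ m then ψ m y else 1) ≠ 0 := by
          intro m
          by_cases hm : n ≤ m
          · rw [if_pos hm]; exact hcon m hm
          · rw [if_neg hm]; norm_num
        simp only [hθdef] at h
        have := finprod_eq_prod _ (hfin n y)
        rw [this] at h
        exact (Finset.prod_ne_zero_iff.2 fun m _ => hne0 m) h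
      · rintro ⟨m, hnm, hm⟩
        simp only [hθdef]
        exact finprod_eq_zero _ m (by rw [if_pos hnm]; exact hm) (hfin n y)
    have hθ1 : ∀ n (y : X), (∀ m, n ≤ m → ψ m y = 1) → θ n y = 1 := by
      intro n y h
      simp only [hθdef]
      apply finprod_eq_one_of_forall_eq_one
      intro m
      by_cases hm : n ≤ m
      · rw [if_pos hm]; exact h m hm
      · rw [if_neg hm]
    have hθlt1 : ∀ n (y : X), θ n y < 1 → ∃ m, n ≤ m ∧ ψ m y < 1 := by
      intro n y h
      by_contra hcon
      push_neg at hcon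
      have : θ n y = 1 := hθ1 n y (fun m hm =>
        le_antisymm (hψ01 m y).2 (hcon m hm))
      rw [this] at h
      exact lt_irrefl _ h
    have hθnonneg : ∀ n (y : X), 0 ≤ θ n y := by
      intro n y
      simp only [hθdef]
      apply finprod_nonneg
      intro m
      by_cases hm : n ≤ m
      · rw [if_pos hm]; exact (hψ01 m y).1
      · rw [if_neg hm]; norm_num
    set T : ℕ → Set X := fun n => {y | θ n y = 0} with hTdef
    have hTz : ∀ n, IsZeroSet (T n) := fun n => ⟨θ n, hθc n, rfl⟩
    have hTdec : ∀ m n, m ≤ n → T n ⊆ T m := by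
      intro m n hmn y hy
      simp only [hTdef, mem_setOf_eq] at hy ⊢
      obtain ⟨k, hk1, hk2⟩ := (hθ0 n y).1 hy
      exact (hθ0 m y).2 ⟨k, le_trans hmn hk1, hk2⟩
    have hTsub : ∀ n, T n ⊆ V' n ∩ L := by
      intro n y hy
      obtain ⟨m, hnm, hm0⟩ := (hθ0 n y).1 hy
      have hc : y ∈ c m := hψlt1 m y (by rw [hm0]; norm_num)
      exact ⟨hV'sub n m hnm hc.1.2, hc.2⟩
    have hxT : ∀ n, x n ∈ T n :=
      fun n => (hθ0 n (x n)).2 ⟨n, le_rfl, (hψ0 n (x n)).2 (hgx n)⟩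
    have hThard : ∀ n, IsHard (T n) := by
      intro n
      refine ⟨(hTz n).isClosed, ∅, isCompact_empty, fun V hV _ => ?_⟩
      set Pn : Set X := {y | θ n y ≤ 1/2} with hPndef
      have hPnc : IsClosed Pn := isClosed_le (hθc n) continuous_const
      have hPncov : Pn ⊆ ⋃ m, Kc m := by
        intro y hy
        simp only [hPndef, mem_setOf_eq] at hy
        have h1 : θ n y < 1 := lt_of_le_of_lt hy (by norm_num)
        obtain ⟨m, hnm, hm⟩ := hθlt1 n y h1
        have hc : y ∈ c m := hψlt1 m y (ne_of_lt hm)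
        exact mem_iUnion.2 ⟨m, interior_subset hc.1.1⟩
      refine ⟨Pn, isRealcompact_sigma Kc hKc hPnc hPncov,
        fun y => min 1 (2 * θ n y),
        continuous_const.min (continuous_const.mul (hθc n)), ?_, ?_⟩
      · rintro y ⟨hy, _⟩
        simp only [hTdef, mem_setOf_eq] at hy
        simp [hy]
      · intro y hy
        have h1 : ¬ θ n y ≤ 1/2 := hy
        push_neg at h1
        have h2 : (1:ℝ) ≤ 2 * θ n y := by linarith
        exact min_eq_left h2
    set F : Set (Set X) := {Z | IsZeroSet Z ∧ ∃ n, T n ⊆ Z} with hFdef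
    have hFhz : IsHZFilter F := by
      constructor
      · refine ⟨fun _ h => h.1, ?_, ⟨isZeroSet_univ, 0, subset_univ _⟩, ?_, ?_⟩
        · rintro ⟨_, n, hsub⟩
          exact notMem_empty _ (hsub (hxT n))
        · rintro Z₁ ⟨hz₁, n₁, hs₁⟩ Z₂ ⟨hz₂, n₂, hs₂⟩
          refine mem_setOf.2 ⟨hz₁.inter hz₂, max n₁ n₂, fun y hy =>
            ⟨hs₁ (hTdec n₁ _ (le_max_left _ _) hy), hs₂ (hTdec n₂ _ (le_max_right _ _) hy)⟩⟩
        · rintro Z₁ ⟨hz₁, n, hs⟩ Z₂ hz₂ hsub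
          exact mem_setOf.2 ⟨hz₂, n, hs.trans hsub⟩
      · rintro Z ⟨hz, n, hs⟩
        exact ⟨T n, ⟨hTz n, n, subset_rfl⟩, hThard n, hs⟩
    obtain ⟨w, hw⟩ := hfix F hFhz
    have hwT : ∀ n, w ∈ T n := fun n => hw _ (mem_setOf.2 ⟨hTz n, n, subset_rfl⟩)
    have hwX₁ : w ∈ X₁ := subset_closure (hTsub 0 (hwT 0)).2
    have hwU : ∀ n, (⟨w, hwX₁⟩ : ↥X₁) ∈ U n := by
      intro n
      have h1 := hTsub n (hwT n)
      rw [← hVU n]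
      exact hV'V n h1.1
    have hfinal : (⟨w, hwX₁⟩ : ↥X₁) ∈ ⋂ n, closure (U n) :=
      mem_iInter.2 (fun n => subset_closure (hwU n))
    rw [hcl] at hfinal
    exact hfinal
  · apply subset_antisymm
    · exact closure_mono (interior_maximal subset_closure isClosed_closure.isOpen_compl)
    · calc closure (interior X₂) ⊆ closure X₂ := closure_mono interior_subset
        _ = X₂ := closure_closure
  · intro y hy hcon
    obtain ⟨N, hNn, hNrc⟩ := hcon
    have hintN : interior N ⊆ L := by
      intro v hv
      exact hRL v ⟨N, mem_nhds_iff.2 ⟨interior N, interior_subset, isOpen_interior, hv⟩, hNrc⟩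
    obtain ⟨v, hv1, hv2⟩ := mem_closure_iff.1 hy _ isOpen_interior
      (mem_interior_iff_mem_nhds.2 hNn)
    exact hv2 (subset_closure (hintN hv1))
  · rw [eq_empty_iff_forall_notMem]
    intro v hv
    have hvcl : v ∈ closure ((closure L)ᶜ) := (interior_subset hv).2
    obtain ⟨u, hu1, hu2⟩ := mem_closure_iff.1 hvcl _ isOpen_interior hv
    exact hu2 ((interior_subset hu1).1)

end Mains
/-- X nearly pseudocompact iff every hz-filter is fixed iff every
hz-ultrafilter (maximal z-filter containing an hz-filter) is fixed. -/
theorem stmt10 [TopologicalSpace X] [T35Space X] :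
    (NearlyPseudocompact X ↔ ∀ F : Set (Set X), IsHZFilter F → IsFixedFamily F) ∧
    ((∀ F : Set (Set X), IsHZFilter F → IsFixedFamily F) ↔
      ∀ F : Set (Set X),
        (IsZUltrafilter F ∧ ∃ G : Set (Set X), IsHZFilter G ∧ G ⊆ F) →
        IsFixedFamily F) := by
  constructor
  · constructor
    · exact fun h => np_imp_fixed h
    · exact fun h => fixed_imp_np h
  · constructor
    · -- every hz-filter fixed → every z-ultrafilter containing an hz-filter fixed
      rintro h F ⟨hFu, G, hG, hGF⟩
      obtain ⟨H₀, hH₀F, hH₀hard, _⟩ := hG.2 univ hG.1.2.2.1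
      have hH₀ : H₀ ∈ F := hGF hH₀F
      set F' : Set (Set X) := {Z | IsZeroSet Z ∧ ∃ W ∈ F, W ∩ H₀ ⊆ Z} with hF'
      have hF'filter : IsHZFilter F' := by
        constructor
        · refine ⟨fun _ h => h.1, ?_, ⟨isZeroSet_univ, univ, hFu.1.2.2.1, subset_univ _⟩,
            ?_, ?_⟩
          · rintro ⟨_, W, hW, hsub⟩
            have hmem : W ∩ H₀ ∈ F := hFu.1.2.2.2.1 _ hW _ hH₀
            have h0 : W ∩ H₀ = ∅ := subset_empty_iff.1 hsub
            rw [h0] at hmem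
            exact hFu.1.2.1 hmem
          · rintro Z₁ ⟨hz₁, W₁, hW₁, hs₁⟩ Z₂ ⟨hz₂, W₂, hW₂, hs₂⟩
            exact mem_setOf.2 ⟨hz₁.inter hz₂, W₁ ∩ W₂, hFu.1.2.2.2.1 _ hW₁ _ hW₂,
              fun x hx => ⟨hs₁ ⟨hx.1.1, hx.2⟩, hs₂ ⟨hx.1.2, hx.2⟩⟩⟩
          · rintro Z₁ ⟨hz₁, W, hW, hs⟩ Z₂ hz₂ hsub
            exact mem_setOf.2 ⟨hz₂, W, hW, hs.trans hsub⟩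
        · rintro Z ⟨hz, W, hW, hs⟩
          refine ⟨W ∩ H₀, ⟨(hFu.1.1 _ hW).inter (hFu.1.1 _ hH₀), W, hW, subset_rfl⟩,
            isHard_mono hH₀hard ((hFu.1.1 _ hW).inter (hFu.1.1 _ hH₀)).isClosed
              inter_subset_right, hs⟩
      obtain ⟨x, hx⟩ := h F' hF'filter
      refine ⟨x, fun Z hZ => ?_⟩
      exact hx _ (mem_setOf.2 ⟨hFu.1.1 _ hZ, Z, hZ, inter_subset_left⟩)
    · -- every such z-ultrafilter fixed → every hz-filter fixed
      intro h F hF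
      obtain ⟨U, hFU, hU⟩ := exists_zultrafilter hF.1
      obtain ⟨x, hx⟩ := h U ⟨hU, F, hF, hFU⟩
      exact ⟨x, fun Z hZ => hx _ (hFU hZ)⟩
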